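/- arXiv:1802.00299 — 4 statements merged into one kernel-verified Lean document; each statement's English description precedes it below -/
import Mathlib

section
/- Let K be a field and V a set of discrete valuations of K such that for every nonzero a in K, the set of v in V with v(a) ≠ 0 is finite. If the Picard group Pic(K, V) := Div(K, V)/P(K, V) (the free abelian group on V modulo the subgroup of principal divisors (a) = Σ_v v(a)·v) is finitely generated, then there exists a finite subset S ⊆ V such that Pic(K, V \ S) = 0. -/
/-- A (normalized, surjective) discrete valuation on a field `K`, recorded by its
values on nonzero elements. -/
structure DVal (K : Type) [Field K] where
  toFun : K → ℤ
  map_one : toFun 1 = 0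
  map_mul : ∀ x y : K, x ≠ 0 → y ≠ 0 → toFun (x * y) = toFun x + toFun y
  surj : ∀ n : ℤ, ∃ x : K, x ≠ 0 ∧ toFun x = n
  min_le : ∀ x y : K, x ≠ 0 → y ≠ 0 → x + y ≠ 0 → min (toFun x) (toFun y) ≤ toFun (x + y)

variable {K : Type} [Field K]

/-- A divisor supported on a set `W` of discrete valuations: an integer-valued function
whose support inside `W` is finite (this encodes an element of the free abelian group on `W`,
recorded via its coefficients). -/
def IsDivisor (W : Set (DVal K)) (d : DVal K → ℤ) : Prop :=
  {v | v ∈ W ∧ d v ≠ 0}.Finite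

/-- The divisor `d` is principal on `W`: on `W` it agrees with the divisor
`(a) = ∑ v(a)·v` of some `a ∈ K^×`. -/
def IsPrincipalOn (W : Set (DVal K)) (d : DVal K → ℤ) : Prop :=
  ∃ a : K, a ≠ 0 ∧ ∀ v ∈ W, d v = v.toFun a

/-- `Pic(K, W) = Div(K, W)/P(K, W)` is finitely generated: there are finitely many divisors
`D 0, …, D (r-1)` such that every divisor on `W` is, on `W`, an integral combination of the
`D i` plus a principal divisor. -/
def PicFG (W : Set (DVal K)) : Prop :=
  ∃ (r : ℕ) (D : Fin r → (DVal K → ℤ)), (∀ i, IsDivisor W (D i)) ∧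
    ∀ d : DVal K → ℤ, IsDivisor W d →
      ∃ (n : Fin r → ℤ) (a : K), a ≠ 0 ∧
        ∀ v ∈ W, d v = (∑ i, n i * D i v) + v.toFun a

/-- The triviality of `Pic(K, W)`: every divisor on `W` is principal on `W`. -/
def PicTrivial (W : Set (DVal K)) : Prop :=
  ∀ d : DVal K → ℤ, IsDivisor W d → IsPrincipalOn W d

/-!
Remove from `V` the finitely many valuations at which some generator of `Pic(K, V)` is nonzero.
A divisor on the remaining valuations, extended by zero to `V`, is an integral combination of the
generators plus a principal divisor; off the removed set the generators vanish, so only the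
principal part survives.
-/

theorem IsDivisor.indicator {V W : Set (DVal K)} {d : DVal K → ℤ} (hd : IsDivisor W d) :
    IsDivisor V (W.indicator d) :=
  hd.subset fun v ⟨_, hv⟩ => ⟨Set.mem_of_indicator_ne_zero hv, fun h => hv (by simp [h])⟩

theorem picTrivial_of_generators_vanish {V W : Set (DVal K)} (hWV : W ⊆ V) {r : ℕ}
    {D : Fin r → DVal K → ℤ}
    (hgen : ∀ d, IsDivisor V d → ∃ (n : Fin r → ℤ) (a : K), a ≠ 0 ∧
      ∀ v ∈ V, d v = (∑ i, n i * D i v) + v.toFun a)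
    (hvanish : ∀ i, ∀ v ∈ W, D i v = 0) :
    PicTrivial W := by
  intro d hd
  obtain ⟨n, a, ha, hdecomp⟩ := hgen _ hd.indicator
  refine ⟨a, ha, fun v hv => ?_⟩
  simpa [Set.indicator_of_mem hv, hvanish _ v hv] using hdecomp v (hWV hv)

theorem picTrivial_of_picFG_general (V : Set (DVal K))
    (hfg : PicFG V) :
    ∃ S : Set (DVal K), S ⊆ V ∧ S.Finite ∧ PicTrivial (V \ S) := by
  obtain ⟨r, D, hD, hgen⟩ := hfg
  refine ⟨⋃ i, {v | v ∈ V ∧ D i v ≠ 0}, Set.iUnion_subset fun _ _ hv => hv.1,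
    Set.finite_iUnion hD, picTrivial_of_generators_vanish Set.sdiff_subset hgen ?_⟩
  intro i v hv
  by_contra hne
  exact hv.2 (Set.mem_iUnion.2 ⟨i, hv.1, hne⟩)

/-- if `V` satisfies condition (A) and `Pic(K, V)` is finitely generated, then
there is a finite subset `S ⊆ V` with `Pic(K, V \ S) = 0`. -/
theorem picTrivial_of_picFG (V : Set (DVal K))
    (hA : ∀ a : K, a ≠ 0 → {v | v ∈ V ∧ v.toFun a ≠ 0}.Finite)
    (hfg : PicFG V) :
    ∃ S : Set (DVal K), S ⊆ V ∧ S.Finite ∧ PicTrivial (V \ S) :=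
  picTrivial_of_picFG_general V hfg
end

section
/- Let G be an algebraic group over a number field K and V the set of all nonarchimedean places of K. If the class set Cl(G, K, V) = G(𝐀^∞(K,V)) \ G(𝐀(K,V)) / G(K) is finite, then G satisfies Condition (T): there exists a finite subset S ⊆ V such that G(𝐀(K, V\S)) = G(𝐀^∞(K, V\S)) · G(K). -/
open Matrix NumberField IsDedekindDomain

variable (K : Type) [Field K] [NumberField K] (n : ℕ)

/-- `x ∈ K` lies in the valuation ring `𝒪_{K,v}` of the nonarchimedean place `v`. -/
def IntegralAt (v : HeightOneSpectrum (𝓞 K)) (x : K) : Prop :=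
  ∃ a b : 𝓞 K, b ∉ v.asIdeal ∧ algebraMap (𝓞 K) K b * x = algebraMap (𝓞 K) K a

variable {K n} (Γ : Subgroup (GL (Fin n) K))

/-- `G(𝒪_{K,v}) = G(K) ∩ GL_n(𝒪_{K,v})`, computed in the fixed matrix realization
`G ⊆ GL_n`: the elements of `Γ = G(K)` whose matrix entries (and those of the inverse)
are `v`-integral. -/
def IntegralPoints (v : HeightOneSpectrum (𝓞 K)) : Set (GL (Fin n) K) :=
  {g | g ∈ Γ ∧ (∀ i j, IntegralAt K v ((g : Matrix (Fin n) (Fin n) K) i j)) ∧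
    (∀ i j, IntegralAt K v (((g⁻¹ : GL (Fin n) K) : Matrix (Fin n) (Fin n) K) i j))}

/-- `x` is a rational adele of `G` with respect to the places in `W`: all components lie in
`G(K) = Γ` and almost all lie in `G(𝒪_{K,v})`. -/
def IsAdele (W : Set (HeightOneSpectrum (𝓞 K)))
    (x : HeightOneSpectrum (𝓞 K) → GL (Fin n) K) : Prop :=
  (∀ v ∈ W, x v ∈ Γ) ∧ {v | v ∈ W ∧ x v ∉ IntegralPoints Γ v}.Finite

/-- `x` is an integral adele with respect to `W`. -/
def IsIntegralAdele (W : Set (HeightOneSpectrum (𝓞 K)))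
    (x : HeightOneSpectrum (𝓞 K) → GL (Fin n) K) : Prop :=
  ∀ v ∈ W, x v ∈ IntegralPoints Γ v

/-- The `v`-integral elements form a subring of `K`. -/
def integralSubring (v : HeightOneSpectrum (𝓞 K)) : Subring K where
  carrier := {x | IntegralAt K v x}
  zero_mem' := ⟨0, 1, (Ideal.ne_top_iff_one _).mp v.isPrime.ne_top, by simp⟩
  one_mem' := ⟨1, 1, (Ideal.ne_top_iff_one _).mp v.isPrime.ne_top, by simp⟩
  add_mem' := by
    rintro x y ⟨a, b, hb, hab⟩ ⟨c, d, hd, hcd⟩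
    refine ⟨a * d + c * b, b * d, fun h => ?_, ?_⟩
    · rcases (v.isPrime.mem_or_mem h) with h | h
      exacts [hb h, hd h]
    · push_cast
      linear_combination (algebraMap (𝓞 K) K d) * hab + (algebraMap (𝓞 K) K b) * hcd
  mul_mem' := by
    rintro x y ⟨a, b, hb, hab⟩ ⟨c, d, hd, hcd⟩
    refine ⟨a * c, b * d, fun h => ?_, ?_⟩
    · rcases (v.isPrime.mem_or_mem h) with h | h
      exacts [hb h, hd h]
    · push_cast
      calc algebraMap (𝓞 K) K b * algebraMap (𝓞 K) K d * (x * y)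
          = (algebraMap (𝓞 K) K b * x) * (algebraMap (𝓞 K) K d * y) := by ring
        _ = algebraMap (𝓞 K) K a * algebraMap (𝓞 K) K c := by rw [hab, hcd]
  neg_mem' := by
    rintro x ⟨a, b, hb, hab⟩
    exact ⟨-a, b, hb, by push_cast; rw [mul_neg, hab]⟩

lemma integralPoints_mul {v : HeightOneSpectrum (𝓞 K)} {g h : GL (Fin n) K}
    (hg : g ∈ IntegralPoints Γ v) (hh : h ∈ IntegralPoints Γ v) :
    g * h ∈ IntegralPoints Γ v := by
  obtain ⟨hg1, hg2, hg3⟩ := hg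
  obtain ⟨hh1, hh2, hh3⟩ := hh
  refine ⟨Γ.mul_mem hg1 hh1, fun i j => ?_, fun i j => ?_⟩
  · have : ((g * h : GL (Fin n) K) : Matrix (Fin n) (Fin n) K) i j
        = ∑ k, (g : Matrix (Fin n) (Fin n) K) i k * (h : Matrix (Fin n) (Fin n) K) k j := by
      simp [Matrix.mul_apply]
    rw [this]
    exact Subring.sum_mem (integralSubring v) fun k _ =>
      (integralSubring v).mul_mem (hg2 i k) (hh2 k j)
  · have : (((g * h)⁻¹ : GL (Fin n) K) : Matrix (Fin n) (Fin n) K) i j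
        = ∑ k, ((h⁻¹ : GL (Fin n) K) : Matrix (Fin n) (Fin n) K) i k *
            ((g⁻¹ : GL (Fin n) K) : Matrix (Fin n) (Fin n) K) k j := by
      simp [_root_.mul_inv_rev, Matrix.mul_apply]
    rw [this]
    exact Subring.sum_mem (integralSubring v) fun k _ =>
      (integralSubring v).mul_mem (hh3 i k) (hg3 k j)

/-- let `G ⊆ GL_n` be an algebraic group over a number field `K` (with group of
rational points `Γ = G(K)`) and `V` the set of all nonarchimedean places.  If the class set
`Cl(G, K, V) = G(𝐀^∞(K,V)) \ G(𝐀(K,V)) / G(K)` is finite, then `G` satisfies Condition (T):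
there is a finite subset `S ⊆ V` with `G(𝐀(K, V∖S)) = G(𝐀^∞(K, V∖S)) · G(K)`. -/
theorem condition_T_of_finite_class_set
    (hfin : ∃ R : Finset (HeightOneSpectrum (𝓞 K) → GL (Fin n) K),
      (∀ g ∈ R, IsAdele Γ Set.univ g) ∧
      ∀ x, IsAdele Γ Set.univ x →
        ∃ g ∈ R, ∃ u γ, IsIntegralAdele Γ Set.univ u ∧ γ ∈ Γ ∧
          ∀ v, x v = u v * g v * γ) :
    ∃ S : Set (HeightOneSpectrum (𝓞 K)), S.Finite ∧
      ∀ x, IsAdele Γ Sᶜ x →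
        ∃ u γ, IsIntegralAdele Γ Sᶜ u ∧ γ ∈ Γ ∧ ∀ v ∈ Sᶜ, x v = u v * γ := by
  classical
  obtain ⟨R, hR1, hR2⟩ := hfin
  set S : Set (HeightOneSpectrum (𝓞 K)) := ⋃ g ∈ R, {v | g v ∉ IntegralPoints Γ v} with hS
  have hSfin : S.Finite := by
    refine Set.Finite.biUnion R.finite_toSet fun g hg => ?_
    have := (hR1 g hg).2
    convert this using 1
    ext v; simp
  refine ⟨S, hSfin, ?_⟩
  · intro x hx
    set x' : HeightOneSpectrum (𝓞 K) → GL (Fin n) K :=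
      fun v => if v ∈ S then 1 else x v with hx'
    have hx'adele : IsAdele Γ Set.univ x' := by
      constructor
      · intro v _
        by_cases h : v ∈ S
        · simp [hx', h, Γ.one_mem]
        · simpa [hx', h] using hx.1 v h
      · refine Set.Finite.subset (hSfin.union hx.2) fun v hv => ?_
        obtain ⟨-, hv⟩ := hv
        by_cases h : v ∈ S
        · exact Or.inl h
        · exact Or.inr ⟨h, by simpa [hx', h] using hv⟩
    obtain ⟨g, hgR, u, γ, hu, hγ, hrep⟩ := hR2 x' hx'adele
    refine ⟨fun v => u v * g v, γ, fun v hv => ?_, hγ, fun v hv => ?_⟩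
    · have hgv : g v ∈ IntegralPoints Γ v := by
        by_contra h
        exact hv (Set.mem_biUnion hgR h)
      exact integralPoints_mul Γ (hu v trivial) hgv
    · have : x v = x' v := by simp [hx', Set.notMem_compl_iff.not.mp, hv]
      rw [this.trans (hrep v)]
end

section
/- Let R be a noetherian integrally closed domain with fraction field K and P its set of height-one primes. For any R-lattice M in W = K^n, the double dual M^** equals ∩_{𝔭∈P} M_𝔭; consequently M^** is reflexive, and M is reflexive if and only if M = ∩_{𝔭∈P} M_𝔭. -/
section

variable {R K : Type} [CommRing R] [IsDomain R] [Field K] [Algebra R K] [IsFractionRing R K]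
  (n : ℕ)

/-- The set of height-one primes of `R` (minimal nonzero primes). -/
def HtOnePrime (R : Type) [CommRing R] : Type :=
  {p : Ideal R // p.IsPrime ∧ p ≠ ⊥ ∧ ∀ q : Ideal R, q.IsPrime → q < p → q = ⊥}

/-- The localization `R_𝔭 · M ⊆ W` of a subset `M` of `W = K^n`. -/
def LocAt (p : HtOnePrime R) (M : Set (Fin n → K)) : Set (Fin n → K) :=
  {x | ∃ s : R, s ∉ p.1 ∧ s • x ∈ M}

/-- An `R`-lattice in `W = K^n`. -/
def IsLattice (M : Submodule R (Fin n → K)) : Prop :=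
  M.FG ∧ Submodule.span K (M : Set (Fin n → K)) = ⊤

/-- The dual lattice `M^* ⊆ W^*`: the linear functionals taking `M` into `R`. -/
def DualLat (M : Set (Fin n → K)) : Set ((Fin n → K) →ₗ[K] K) :=
  {f | ∀ x ∈ M, ∃ r : R, f x = algebraMap R K r}

/-- The double dual `M^{**}`, identified with a lattice in `W` via `W ≅ W^{**}`. -/
def DDual (M : Set (Fin n → K)) : Set (Fin n → K) :=
  {x | ∀ f ∈ DualLat (R := R) n M, ∃ r : R, f x = algebraMap R K r}

end

/-! For a height-one prime `𝔭` the localization `R_𝔭` is a discrete valuation ring, so the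
`R_𝔭`-lattice `M_𝔭` is free and therefore reflexive over `R_𝔭`. As `M` is finitely generated,
an `R_𝔭`-valued functional on `M_𝔭` becomes `R`-valued on `M` after scaling by some `s ∉ 𝔭`;
hence `M^** ⊆ M_𝔭`. Conversely `M^*` maps `⋂ M_𝔭` into `⋂ R_𝔭`, which is `R` because every
associated prime `𝔭 = ann(z̄)` of `K/R` has height one: `z` multiplies the maximal ideal `𝔪` of
`R_𝔭` into `R_𝔭`, not into `𝔪` (else `z` would be integral over `R_𝔭`), so `z𝔪 = R_𝔭` and `𝔪`
is principal. The remaining claims are formal, since `M ↦ M^**` is a closure operator. -/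

open IsLocalRing

theorem IsLocalization.AtPrime.forall_lt_eq_bot_iff {R S : Type*} [CommRing R] [IsDomain R]
    [CommRing S] [Algebra R S] [IsLocalRing S] (p : Ideal R) [p.IsPrime]
    [IsLocalization.AtPrime S p] :
    (∀ q : Ideal R, q.IsPrime → q < p → q = ⊥) ↔
      ∀ Q : Ideal S, Q ≠ ⊥ → Q.IsPrime → Q = maximalIdeal S := by
  constructor
  · intro hp Q hQ hQp
    have hle : Q.under R ≤ p := by
      rw [← IsLocalization.AtPrime.under_maximalIdeal S p]
      exact Ideal.comap_mono (le_maximalIdeal hQp.ne_top)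
    rw [← IsLocalization.map_under p.primeCompl S Q] at hQ ⊢
    rcases hle.lt_or_eq with hlt | heq
    · rw [hp _ (Ideal.IsPrime.under R Q) hlt, Ideal.map_bot] at hQ
      exact (hQ rfl).elim
    · rw [heq, IsLocalization.AtPrime.map_eq_maximalIdeal]
  · intro hS q hq hlt
    have hdisj : Disjoint (p.primeCompl : Set R) q :=
      Set.disjoint_left.mpr fun _ hs hsq ↦ hs (hlt.le hsq)
    have hunder := IsLocalization.under_map_of_isPrime_disjoint p.primeCompl S hq hdisj
    by_cases hbot : q.map (algebraMap R S) = ⊥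
    · rw [← hunder, hbot]
      exact Ideal.comap_bot_of_injective _
        (IsLocalization.injective S p.primeCompl_le_nonZeroDivisors)
    · refine absurd ?_ hlt.ne
      have hprime := IsLocalization.isPrime_of_isPrime_disjoint p.primeCompl S q hq hdisj
      rw [← hunder, hS _ hbot hprime, IsLocalization.AtPrime.under_maximalIdeal S p]

theorem IsLocalRing.isPrincipal_maximalIdeal_of_mul_mem_range {A K : Type*} [CommRing A]
    [IsDomain A] [IsNoetherianRing A] [IsLocalRing A] [IsIntegrallyClosed A] [Field K]
    [Algebra A K] [IsFractionRing A K] {z : K} (hz : z ∉ (algebraMap A K).range)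
    (hzm : ∀ v ∈ maximalIdeal A, z * algebraMap A K v ∈ (algebraMap A K).range) :
    (maximalIdeal A).IsPrincipal := by
  by_cases hbot : maximalIdeal A = ⊥
  · rw [hbot]; exact bot_isPrincipal
  have hunit : ∃ v ∈ maximalIdeal A, ∃ w : A,
      IsUnit w ∧ algebraMap A K w = z * algebraMap A K v := by
    by_contra! hnonunit
    let N : Submodule A K := Submodule.map (Algebra.linearMap A K) (maximalIdeal A)
    have hN : N ≠ ⊥ := by
      refine fun h ↦ hbot (Submodule.map_injective_of_injective
        (f := Algebra.linearMap A K) (IsFractionRing.injective A K) ?_)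
      exact h.trans (Submodule.map_bot _).symm
    have hint : IsIntegral A z := by
      refine isIntegral_of_smul_mem_submodule N hN (IsNoetherian.noetherian _ |>.map _) z ?_
      rintro _ ⟨v, hv, rfl⟩
      obtain ⟨w, hw⟩ := hzm v hv
      exact ⟨w, (mem_maximalIdeal w).mpr (hnonunit v hv w · hw), hw⟩
    exact hz (IsIntegrallyClosed.isIntegral_iff.mp hint)
  obtain ⟨v, hv, w, hw, hwz⟩ := hunit
  refine ⟨↑hw.unit⁻¹ * v, le_antisymm (fun x hx ↦ ?_) ?_⟩
  · obtain ⟨a, ha⟩ := hzm x hx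
    refine Ideal.mem_span_singleton'.mpr ⟨a, IsFractionRing.injective A K ?_⟩
    have hinv : algebraMap A K ↑hw.unit⁻¹ * algebraMap A K w = 1 := by
      rw [← map_mul, IsUnit.val_inv_mul, map_one]
    rw [map_mul, map_mul, ha]
    linear_combination (-(algebraMap A K x * algebraMap A K ↑hw.unit⁻¹)) * hwz
      + algebraMap A K x * hinv
  · exact (Ideal.span_singleton_le_iff_mem _).mpr (Ideal.mul_mem_left _ _ hv)

theorem IsLocalization.AtPrime.isPrincipalIdealRing_of_forall_lt_eq_bot {R S : Type*}
    [CommRing R] [IsDomain R] [IsNoetherianRing R] [IsIntegrallyClosed R] [CommRing S]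
    [Algebra R S] (p : Ideal R) [p.IsPrime] [IsLocalization.AtPrime S p]
    (hp : ∀ q : Ideal R, q.IsPrime → q < p → q = ⊥) : IsPrincipalIdealRing S := by
  have := IsLocalization.isDomain_of_atPrime S p
  have := IsLocalization.isNoetherianRing p.primeCompl S ‹_›
  have := IsLocalization.AtPrime.isLocalRing S p
  have := isIntegrallyClosed_of_isLocalization S p.primeCompl p.primeCompl_le_nonZeroDivisors
  have htfae := (tfae_of_isNoetherianRing_of_isLocalRing_of_isDomain S).out 0 3
  exact htfae.mpr ⟨inferInstance, (forall_lt_eq_bot_iff p).mp hp⟩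

theorem IsLocalization.AtPrime.mem_subalgebra_iff {R K : Type*} [CommRing R] [Field K]
    [Algebra R K] (p : Ideal R) [p.IsPrime] (A : Subalgebra R K) [IsLocalization.AtPrime A p]
    {x : K} : x ∈ A ↔ ∃ s ∉ p, algebraMap R K s * x ∈ (algebraMap R K).range := by
  constructor
  · intro hx
    obtain ⟨⟨r, s⟩, h⟩ := IsLocalization.surj p.primeCompl (⟨x, hx⟩ : A)
    refine ⟨s, s.2, r, ?_⟩
    simpa [mul_comm] using (congrArg Subtype.val h).symm
  · rintro ⟨s, hs, r, hr⟩
    obtain ⟨u, hu⟩ := IsLocalization.map_units A (⟨s, hs⟩ : p.primeCompl)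
    have hinv : ((↑u⁻¹ : A) : K) * algebraMap R K s = 1 := by
      rw [IsScalarTower.algebraMap_apply R A K, ← hu]
      exact congrArg Subtype.val u.inv_mul
    have : x = ((↑u⁻¹ : A) : K) * algebraMap R K r := by
      rw [hr]; linear_combination (-x) * hinv
    rw [this]
    exact A.mul_mem (↑u⁻¹ : A).2 (A.algebraMap_mem r)

theorem mem_colon_bot_mk_iff {R K : Type*} [CommRing R] [Field K] [Algebra R K] (r : R)
    (z : K) :
    r ∈ (⊥ : Submodule R (K ⧸ (1 : Submodule R K))).colon {Submodule.Quotient.mk z} ↔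
      algebraMap R K r * z ∈ (algebraMap R K).range := by
  rw [Submodule.mem_colon_singleton, Submodule.mem_bot, ← Submodule.Quotient.mk_smul,
    Submodule.Quotient.mk_eq_zero, Submodule.mem_one, Algebra.smul_def]
  rfl

theorem isHeightOne_of_isAssociatedPrime_quotient_one {R K : Type*} [CommRing R] [IsDomain R]
    [IsNoetherianRing R] [IsIntegrallyClosed R] [Field K] [Algebra R K] [IsFractionRing R K]
    {P : Ideal R} (hP : IsAssociatedPrime P (K ⧸ (1 : Submodule R K))) :
    P.IsPrime ∧ P ≠ ⊥ ∧ ∀ q : Ideal R, q.IsPrime → q < P → q = ⊥ := by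
  obtain ⟨hPp, z', hz'⟩ := isAssociatedPrime_iff.mp hP
  obtain ⟨z, rfl⟩ := Submodule.Quotient.mk_surjective _ z'
  have hmem (r : R) : r ∈ P ↔ algebraMap R K r * z ∈ (algebraMap R K).range :=
    hz' ▸ mem_colon_bot_mk_iff r z
  refine ⟨hPp, fun hbot ↦ ?_, ?_⟩
  · obtain ⟨a, b, hb, rfl⟩ := IsFractionRing.div_surjective (A := R) z
    have hbP : b ∈ P := (hmem b).mpr ⟨a, by
      field_simp [IsFractionRing.to_map_ne_zero_of_mem_nonZeroDivisors hb]⟩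
    exact nonZeroDivisors.ne_zero hb (by simpa [hbot] using hbP)
  let A := Localization.subalgebra.ofField K P.primeCompl P.primeCompl_le_nonZeroDivisors
  have := IsLocalization.isNoetherianRing P.primeCompl A ‹_›
  have := IsLocalization.AtPrime.isLocalRing A P
  have := isIntegrallyClosed_of_isLocalization A P.primeCompl P.primeCompl_le_nonZeroDivisors
  have hz : z ∉ (algebraMap A K).range := by
    rintro ⟨a, rfl⟩
    obtain ⟨s, hs, hsa⟩ := (IsLocalization.AtPrime.mem_subalgebra_iff P A).mp a.2
    exact hs ((hmem s).mpr hsa)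
  have hzm (v) (hv : v ∈ IsLocalRing.maximalIdeal A) :
      z * algebraMap A K v ∈ (algebraMap A K).range := by
    obtain ⟨s, hs, r, hr⟩ := (IsLocalization.AtPrime.mem_subalgebra_iff P A).mp v.2
    have hrP : r ∈ P := by
      have hrv : algebraMap R A r = algebraMap R A s * v := Subtype.ext hr
      rw [← IsLocalization.AtPrime.to_map_mem_maximal_iff A P r, hrv]
      exact Ideal.mul_mem_left _ _ hv
    obtain ⟨c, hc⟩ := (hmem r).mp hrP
    have hzv : z * algebraMap A K v ∈ A := by
      refine (IsLocalization.AtPrime.mem_subalgebra_iff P A).mpr ⟨s, hs, c, ?_⟩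
      change algebraMap R K c = algebraMap R K s * (z * v)
      linear_combination hc + z * hr
    exact ⟨⟨_, hzv⟩, rfl⟩
  have hprin := IsLocalRing.isPrincipal_maximalIdeal_of_mul_mem_range hz hzm
  have htfae := (tfae_of_isNoetherianRing_of_isLocalRing_of_isDomain A).out 4 3
  exact (IsLocalization.AtPrime.forall_lt_eq_bot_iff P).mpr (htfae.mp hprin).2

namespace HtOnePrime

instance isPrime {R : Type} [CommRing R] (p : HtOnePrime R) : p.1.IsPrime := p.2.1

variable {R : Type} [CommRing R] [IsDomain R] (K : Type*) [Field K] [Algebra R K]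
  [IsFractionRing R K]

noncomputable abbrev localization (p : HtOnePrime R) : Subalgebra R K :=
  Localization.subalgebra.ofField K p.1.primeCompl p.1.primeCompl_le_nonZeroDivisors

theorem iInf_localization_eq_bot [IsNoetherianRing R] [IsIntegrallyClosed R] :
    ⨅ p : HtOnePrime R, p.localization K = ⊥ := by
  ext x
  rw [Algebra.mem_iInf, Algebra.mem_bot]
  refine ⟨fun hx ↦ ?_, fun ⟨r, hr⟩ p ↦ hr ▸ (p.localization K).algebraMap_mem r⟩
  by_contra hxR
  have hne : Submodule.Quotient.mk (p := (1 : Submodule R K)) x ≠ 0 := by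
    rwa [Ne, Submodule.Quotient.mk_eq_zero, Submodule.mem_one]
  obtain ⟨P, hP, hle⟩ := exists_le_isAssociatedPrime_of_isNoetherianRing R _ hne
  have := hP.isPrime
  obtain ⟨s, hs, hsx⟩ := (IsLocalization.AtPrime.mem_subalgebra_iff P _).mp
    (hx ⟨P, isHeightOne_of_isAssociatedPrime_quotient_one hP⟩)
  exact hs (hle ((mem_colon_bot_mk_iff s x).mpr hsx))

end HtOnePrime

theorem dDual_subset_of_isPrincipalIdealRing {A K : Type} [CommRing A] [IsDomain A]
    [IsPrincipalIdealRing A] [Field K] [Algebra A K] [IsFractionRing A K] {n : ℕ}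
    {L : Submodule A (Fin n → K)} (hL : IsLattice n L) :
    DDual (R := A) n (L : Set (Fin n → K)) ⊆ L := by
  have : Module.Finite A L := Module.Finite.iff_fg.mpr hL.1
  have : Module.IsTorsionFree A K :=
    Module.isTorsionFree_iff_algebraMap_injective.mpr (IsFractionRing.injective A K)
  have : Module.Free A L := Module.free_of_finite_type_torsion_free'
  let b := Module.Free.chooseBasis A L
  let v := L.subtype ∘ b
  have hspanA : Submodule.span A (Set.range v) = L := by
    rw [Set.range_comp, Submodule.span_image, b.span_eq, Submodule.map_top,
      Submodule.range_subtype]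
  have hli : LinearIndependent K v := (LinearIndependent.iff_fractionRing A K).mp
    (b.linearIndependent.map' L.subtype L.ker_subtype)
  have hspanK : ⊤ ≤ Submodule.span K (Set.range v) := by
    rw [← hL.2, ← Submodule.span_span_of_tower A K (Set.range v), hspanA]
  let c := Module.Basis.mk hli hspanK
  have hcoord (l : L) (i) : c.repr l i = algebraMap A K (b.repr l i) := by
    have hl : (l : Fin n → K) = ∑ j, algebraMap A K (b.repr l j) • c j :=
      calc (l : Fin n → K) = L.subtype (∑ j, b.repr l j • b j) := by rw [b.sum_repr]; rfl
        _ = ∑ j, algebraMap A K (b.repr l j) • c j := by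
          simp only [map_sum, map_smul, c, v, Module.Basis.mk_apply, Function.comp_apply,
            algebraMap_smul]
    rw [hl, c.repr_sum_self]
  intro x hx
  choose a ha using fun i ↦ hx (c.coord i) fun y hy ↦ ⟨b.repr ⟨y, hy⟩ i, hcoord ⟨y, hy⟩ i⟩
  rw [← c.sum_repr x]
  refine Submodule.sum_mem _ fun i _ ↦ ?_
  rw [← c.coord_apply, ha, algebraMap_smul, Module.Basis.mk_apply]
  exact L.smul_mem _ (hspanA ▸ Submodule.subset_span ⟨i, rfl⟩)

section Lattice

variable {R K : Type} [CommRing R] [Field K] [Algebra R K] {n : ℕ}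

theorem subset_dDual (M : Set (Fin n → K)) : M ⊆ DDual (R := R) n M :=
  fun x hx _ hf ↦ hf x hx

theorem dDual_dDual (M : Set (Fin n → K)) :
    DDual (R := R) n (DDual (R := R) n M) = DDual (R := R) n M :=
  Set.Subset.antisymm (fun _ hx f hf ↦ hx f fun _ hy ↦ hy f hf) (subset_dDual _)

theorem coe_span_eq_locAt (p : HtOnePrime R) (A : Subalgebra R K)
    [IsLocalization.AtPrime A p.1] (M : Submodule R (Fin n → K)) :
    (Submodule.span A (M : Set (Fin n → K)) : Set (Fin n → K)) = LocAt n p M := by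
  have hcancel (s : p.1.primeCompl) (x : Fin n → K) :
      IsLocalization.mk' A (1 : R) s • (s : R) • x = x := by
    rw [← algebraMap_smul A (s : R) x, smul_smul, IsLocalization.mk'_spec, map_one, one_smul]
  ext x
  simp only [SetLike.mem_coe, IsLocalization.mem_span_iff p.1.primeCompl, Submodule.span_eq]
  constructor
  · rintro ⟨y, hy, s, rfl⟩
    exact ⟨s, s.2, by rwa [smul_comm, hcancel]⟩
  · rintro ⟨s, hs, hsx⟩
    exact ⟨_, hsx, ⟨s, hs⟩, (hcancel ⟨s, hs⟩ x).symm⟩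

theorem IsLattice.span_subalgebra {M : Submodule R (Fin n → K)} (hM : IsLattice n M)
    (A : Subalgebra R K) : IsLattice n (Submodule.span A (M : Set (Fin n → K))) := by
  obtain ⟨⟨T, hT⟩, hspan⟩ := hM
  refine ⟨⟨T, ?_⟩, ?_⟩
  · rw [← hT, Submodule.span_span_of_tower]
  · rw [Submodule.span_span_of_tower, hspan]

theorem exists_mul_mem_range_of_fg {V : Type*} [AddCommGroup V] [Module R V] (p : Ideal R)
    [p.IsPrime] (A : Subalgebra R K) [IsLocalization.AtPrime A p] {M : Submodule R V}
    (hM : M.FG) (f : V →ₗ[R] K) (hf : ∀ m ∈ M, f m ∈ A) :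
    ∃ s ∉ p, ∀ m ∈ M, algebraMap R K s * f m ∈ (algebraMap R K).range := by
  induction M, hM using Submodule.fg_induction with
  | singleton x =>
    obtain ⟨s, hs, r, hr⟩ := (IsLocalization.AtPrime.mem_subalgebra_iff p A).mp
      (hf x (Submodule.mem_span_singleton_self x))
    refine ⟨s, hs, fun m hm ↦ ?_⟩
    obtain ⟨a, rfl⟩ := Submodule.mem_span_singleton.mp hm
    refine ⟨a * r, ?_⟩
    rw [map_smul, Algebra.smul_def, map_mul, hr]
    ring
  | sup N₁ N₂ _ _ ih₁ ih₂ =>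
    obtain ⟨s₁, hs₁, h₁⟩ := ih₁ fun m hm ↦ hf m (Submodule.mem_sup_left hm)
    obtain ⟨s₂, hs₂, h₂⟩ := ih₂ fun m hm ↦ hf m (Submodule.mem_sup_right hm)
    refine ⟨s₁ * s₂, fun h ↦ (‹p.IsPrime›.mem_or_mem h).elim hs₁ hs₂, fun m hm ↦ ?_⟩
    obtain ⟨m₁, hm₁, m₂, hm₂, rfl⟩ := Submodule.mem_sup.mp hm
    obtain ⟨r₁, hr₁⟩ := h₁ m₁ hm₁
    obtain ⟨r₂, hr₂⟩ := h₂ m₂ hm₂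
    refine ⟨s₂ * r₁ + s₁ * r₂, ?_⟩
    rw [map_add, map_add, map_mul, map_mul, hr₁, hr₂, map_mul]
    ring

theorem dDual_subset_dDual_span (p : Ideal R) [p.IsPrime] (A : Subalgebra R K)
    [IsLocalization.AtPrime A p] {M : Submodule R (Fin n → K)} (hM : M.FG) :
    DDual (R := R) n (M : Set (Fin n → K)) ⊆
      DDual (R := A) n (Submodule.span A (M : Set (Fin n → K))) := by
  intro x hx f hf
  obtain ⟨s, hs, hsf⟩ := exists_mul_mem_range_of_fg p A hM (f.restrictScalars R) fun m hm ↦ by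
    obtain ⟨a, ha⟩ := hf m (Submodule.subset_span hm)
    rw [LinearMap.restrictScalars_apply, ha]
    exact a.2
  obtain ⟨r, hr⟩ := hx (algebraMap R K s • f) fun m hm ↦
    (hsf m hm).imp fun _ hr ↦ hr.symm
  exact ⟨⟨f x, (IsLocalization.AtPrime.mem_subalgebra_iff p A).mpr ⟨s, hs, r, hr.symm⟩⟩, rfl⟩

theorem dDual_subset_locAt [IsDomain R] [IsNoetherianRing R] [IsIntegrallyClosed R]
    [IsFractionRing R K] {M : Submodule R (Fin n → K)} (hM : IsLattice n M) (p : HtOnePrime R) :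
    DDual (R := R) n (M : Set (Fin n → K)) ⊆ LocAt n p M := by
  let A := p.localization K
  have : IsPrincipalIdealRing A :=
    IsLocalization.AtPrime.isPrincipalIdealRing_of_forall_lt_eq_bot p.1 p.2.2.2
  rw [← coe_span_eq_locAt p A]
  exact (dDual_subset_dDual_span p.1 A hM.1).trans
    (dDual_subset_of_isPrincipalIdealRing (hM.span_subalgebra A))

theorem iInter_locAt_subset_dDual [IsDomain R] [IsNoetherianRing R] [IsIntegrallyClosed R]
    [IsFractionRing R K] (M : Set (Fin n → K)) :
    ⋂ p : HtOnePrime R, LocAt n p M ⊆ DDual (R := R) n M := by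
  intro x hx f hf
  have hfx : f x ∈ ⨅ p : HtOnePrime R, p.localization K := Algebra.mem_iInf.mpr fun p ↦ by
    obtain ⟨s, hs, hsx⟩ := Set.mem_iInter.mp hx p
    obtain ⟨r, hr⟩ := hf _ hsx
    refine (IsLocalization.AtPrime.mem_subalgebra_iff p.1 _).mpr ⟨s, hs, r, ?_⟩
    rw [← hr, ← algebraMap_smul K s x, map_smul, smul_eq_mul]
  rw [HtOnePrime.iInf_localization_eq_bot, Algebra.mem_bot] at hfx
  obtain ⟨r, hr⟩ := hfx
  exact ⟨r, hr.symm⟩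

end Lattice

/-- let `R` be a noetherian integrally closed domain with fraction field `K`
and `P` its set of height-one primes.  For any `R`-lattice `M` in `W = K^n`, the double dual
`M^{**}` equals `∩_{𝔭 ∈ P} M_𝔭`; consequently `M^{**}` is reflexive, and `M` is reflexive
(i.e. `M = M^{**}`) if and only if `M = ∩_{𝔭 ∈ P} M_𝔭`. -/
theorem double_dual_eq_inter_localizations (R K : Type) [CommRing R] [IsDomain R]
    [IsNoetherianRing R] [IsIntegrallyClosed R] [Field K] [Algebra R K] [IsFractionRing R K]
    (n : ℕ) (M : Submodule R (Fin n → K)) (hM : IsLattice n M) :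
    DDual (R := R) n (M : Set (Fin n → K))
        = ⋂ p : HtOnePrime R, LocAt n p (M : Set (Fin n → K)) ∧
    DDual (R := R) n (DDual (R := R) n (M : Set (Fin n → K)))
        = DDual (R := R) n (M : Set (Fin n → K)) ∧
    ((M : Set (Fin n → K)) = DDual (R := R) n (M : Set (Fin n → K)) ↔
      (M : Set (Fin n → K)) = ⋂ p : HtOnePrime R, LocAt n p (M : Set (Fin n → K))) := by
  have hloc : DDual (R := R) n (M : Set (Fin n → K)) = ⋂ p : HtOnePrime R, LocAt n p M :=
    (Set.subset_iInter (dDual_subset_locAt hM)).antisymm (iInter_locAt_subset_dDual _)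
  exact ⟨hloc, dDual_dDual _, by rw [hloc]⟩
end

section
/- Let R be an integrally closed noetherian domain with fraction field K, let L/K be a finite Galois extension of degree d with group 𝒢, and let R' be the integral closure of R in L. Assume (a) R' is a free R-module with basis a₁,…,a_d, and (b) the discriminant det(Tr_{L/K}(a_i a_j)) is a unit in R. Let W be an L-vector space with a semi-linear 𝒢-action and M ⊆ W a 𝒢-invariant R'-submodule. Then for M₀ = M^𝒢, the canonical map M₀ ⊗_R R' → M is an isomorphism. -/
set_option maxHeartbeats 2000000 in
set_option synthInstance.maxHeartbeats 200000 in
/-- Lemma 7.1, Galois descent: let `R` be an integrally closed noetherian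
domain with fraction field `K`, `L/K` finite Galois of degree `d` with group `𝒢`, and `R'`
the integral closure of `R` in `L`.  Assume (a) `R'` is free over `R` with basis
`a₁, …, a_d`, and (b) the discriminant `det(Tr_{L/K}(aᵢaⱼ))` is a unit in `R`.  If `W` is an
`L`-vector space with a semi-linear `𝒢`-action `ρ` and `M ⊆ W` is a `𝒢`-invariant
`R'`-submodule, then for `M₀ = M^𝒢` the canonical map `M₀ ⊗_R R' → M` is an isomorphism:
every `m ∈ M` is uniquely `∑ⱼ aⱼ • xⱼ` with all `xⱼ ∈ M₀`. -/
theorem galois_descent_lemma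
    (R K L : Type) [CommRing R] [IsDomain R] [IsNoetherianRing R] [IsIntegrallyClosed R]
    [Field K] [Field L] [Algebra R K] [IsFractionRing R K]
    [Algebra K L] [Algebra R L] [IsScalarTower R K L]
    [FiniteDimensional K L] [IsGalois K L]
    (d : ℕ) (hd : Module.finrank K L = d)
    -- (a) `R'` is a free `R`-module, with basis `a`
    (a : Module.Basis (Fin d) R ↥(integralClosure R L))
    -- (b) the discriminant of the trace form in the basis `a` is a unit in `R`
    (hdisc : ∃ u : Rˣ, algebraMap R K (u : R) =
      Matrix.det (Matrix.of fun i j : Fin d =>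
        Algebra.trace K L (((a i : L)) * ((a j : L)))))
    -- `W` with a semi-linear action `ρ` of `𝒢 = Gal(L/K)`
    (W : Type) [AddCommGroup W] [Module L W]
    (ρ : (L ≃ₐ[K] L) → W → W)
    (hadd : ∀ σ x y, ρ σ (x + y) = ρ σ x + ρ σ y)
    (hsmul : ∀ σ (c : L) x, ρ σ (c • x) = σ c • ρ σ x)
    (hone : ∀ x, ρ 1 x = x)
    (hcomp : ∀ σ τ x, ρ (σ * τ) x = ρ σ (ρ τ x))
    -- `M ⊆ W` a `𝒢`-invariant `R'`-submodule
    (M : Set W)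
    (hzero : (0 : W) ∈ M)
    (haddM : ∀ x ∈ M, ∀ y ∈ M, x + y ∈ M)
    (hsmulM : ∀ (r : ↥(integralClosure R L)), ∀ x ∈ M, ((r : L)) • x ∈ M)
    (hinvM : ∀ (σ : L ≃ₐ[K] L), ∀ x ∈ M, ρ σ x ∈ M) :
    ∀ m ∈ M, ∃! x : Fin d → W,
      (∀ j, x j ∈ M ∧ ∀ σ : L ≃ₐ[K] L, ρ σ (x j) = x j) ∧
      ∑ j, ((a j : L)) • x j = m := by
  classical
  intro m hm
  obtain ⟨u, hu⟩ := hdisc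
  -- basic properties of ρ
  have hρ0 : ∀ σ, ρ σ (0 : W) = 0 := by
    intro σ
    have h := hadd σ 0 0
    rw [add_zero] at h
    exact (left_eq_add.mp h)
  have hρsum : ∀ (σ : L ≃ₐ[K] L) (s : Finset (Fin d)) (f : Fin d → W),
      ρ σ (∑ i ∈ s, f i) = ∑ i ∈ s, ρ σ (f i) := by
    intro σ s f
    induction s using Finset.induction_on with
    | empty => simpa using hρ0 σ
    | insert _ _ hns ih =>
        rw [Finset.sum_insert hns, Finset.sum_insert hns, hadd, ih]
  have hρsub : ∀ σ (x y : W), ρ σ (x - y) = ρ σ x - ρ σ y := by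
    intro σ x y
    have h := hadd σ (x - y) y
    rw [show x - y + y = x from by abel] at h
    rw [eq_sub_iff_add_eq, ← h]
  have hsumM : ∀ (s : Finset (Fin d)) (f : Fin d → W),
      (∀ i ∈ s, f i ∈ M) → (∑ i ∈ s, f i) ∈ M := by
    intro s f hf
    induction s using Finset.induction_on with
    | empty => simpa using hzero
    | insert _ _ hns ih =>
        rename_i i s
        rw [Finset.sum_insert hns]
        exact haddM _ (hf i (Finset.mem_insert_self i s)) _
          (ih fun j hj => hf j (Finset.mem_insert_of_mem hj))
  -- indexing of the Galois group
  have hcard : Fintype.card (L ≃ₐ[K] L) = d := by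
    rw [← Nat.card_eq_fintype_card, IsGalois.card_aut_eq_finrank, hd]
  let e : (L ≃ₐ[K] L) ≃ Fin d := Fintype.equivFinOfCardEq hcard
  let g : Fin d → (L ≃ₐ[K] L) := e.symm
  -- the matrix A with entries σᵢ(aⱼ), over R'
  have hint : ∀ (σ : L ≃ₐ[K] L) (r : ↥(integralClosure R L)), σ (r : L) ∈ integralClosure R L :=
    fun σ r => IsIntegral.map (AlgEquiv.restrictScalars R σ) r.2
  let A : Matrix (Fin d) (Fin d) ↥(integralClosure R L) := fun i j => ⟨g i (a j : L), hint _ _⟩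
  let f : ↥(integralClosure R L) →+* L := (Subalgebra.val (integralClosure R L)).toRingHom
  have hfinj : Function.Injective f := Subtype.coe_injective
  let Al : Matrix (Fin d) (Fin d) L := A.map f
  have hAl : ∀ i j, Al i j = g i (a j : L) := fun i j => rfl
  -- (det A)² = u in R'
  have hdet2 : A.det * A.det = algebraMap R ↥(integralClosure R L) (u : R) := by
    apply hfinj
    rw [map_mul, RingHom.map_det]
    have hmm : (f.mapMatrix A) = Al := rfl
    rw [hmm]
    have h1 : Al.transpose * Al = ((algebraMap K L).mapMatrix
        (Matrix.of fun i j : Fin d => Algebra.trace K L ((a i : L) * (a j : L)))) := by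
      ext i j
      rw [Matrix.mul_apply]
      show ∑ k, Al k i * Al k j = algebraMap K L (Algebra.trace K L ((a i : L) * (a j : L)))
      rw [trace_eq_sum_automorphisms ((a i : L) * (a j : L))]
      rw [← Equiv.sum_comp e.symm (fun σ => σ ((a i : L) * (a j : L)))]
      apply Finset.sum_congr rfl
      intro k _
      rw [hAl, hAl, ← map_mul]
    have h2 : (Al.transpose * Al).det = algebraMap R L (u : R) := by
      rw [h1, ← RingHom.map_det, ← hu, ← IsScalarTower.algebraMap_apply]
    rw [Matrix.det_mul, Matrix.det_transpose] at h2
    rw [h2]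
    rfl
  -- the inverse matrix B over R'
  let c : ↥(integralClosure R L) := algebraMap R ↥(integralClosure R L) ((u⁻¹ : Rˣ) : R) * A.det
  let B : Matrix (Fin d) (Fin d) ↥(integralClosure R L) :=
    Matrix.of fun i j => c * A.adjugate i j
  have hcAdet : c * A.det = 1 := by
    have h : c * A.det = algebraMap R ↥(integralClosure R L) ((u⁻¹ : Rˣ) : R) *
        (A.det * A.det) := by ring
    rw [h, hdet2, ← map_mul]
    simp
  have hAB : A * B = 1 := by
    have hadj := Matrix.mul_adjugate A
    ext i j
    rw [Matrix.mul_apply]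
    have h : ∀ k, A i k * B k j = c * (A i k * A.adjugate k j) := by
      intro k
      show A i k * (c * A.adjugate k j) = _
      ring
    rw [Finset.sum_congr rfl (fun k _ => h k), ← Finset.mul_sum, ← Matrix.mul_apply, hadj,
      Matrix.smul_apply, smul_eq_mul, ← mul_assoc, hcAdet, one_mul]
  have hBA : B * A = 1 := by
    have hadj := Matrix.adjugate_mul A
    ext i j
    rw [Matrix.mul_apply]
    have h : ∀ k, B i k * A k j = c * (A.adjugate i k * A k j) := by
      intro k
      show (c * A.adjugate i k) * A k j = _
      ring
    rw [Finset.sum_congr rfl (fun k _ => h k), ← Finset.mul_sum, ← Matrix.mul_apply, hadj,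
      Matrix.smul_apply, smul_eq_mul, ← mul_assoc, hcAdet, one_mul]
  let Bl : Matrix (Fin d) (Fin d) L := B.map f
  have hABl : Al * Bl = 1 := by
    show A.map f * B.map f = 1
    rw [← Matrix.map_mul, hAB, Matrix.map_one f (map_zero f) (map_one f)]
  have hBAl : Bl * Al = 1 := by
    show B.map f * A.map f = 1
    rw [← Matrix.map_mul, hBA, Matrix.map_one f (map_zero f) (map_one f)]
  -- equivariance of A, B
  have hgA : ∀ (τ : L ≃ₐ[K] L) (k j : Fin d), τ (Al k j) = Al (e (τ * g k)) j := by
    intro τ k j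
    rw [hAl, hAl]
    have h : g (e (τ * g k)) = τ * g k := e.symm_apply_apply _
    rw [h]
    rfl
  have hgB : ∀ (τ : L ≃ₐ[K] L) (j k : Fin d), τ (Bl j k) = Bl j (e (τ * g k)) := by
    intro τ j k
    let p : Fin d ≃ Fin d := e.symm.trans ((Equiv.mulLeft τ).trans e)
    have hp : ∀ k, p k = e (τ * g k) := fun k => rfl
    let X : Matrix (Fin d) (Fin d) L := Matrix.of fun i j => τ (Al i j)
    let Y : Matrix (Fin d) (Fin d) L := Matrix.of fun i j => τ (Bl i j)
    have hX : ∀ i j, X i j = τ (Al i j) := fun i j => rfl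
    have hY : ∀ i j, Y i j = τ (Bl i j) := fun i j => rfl
    have hXsub : ∀ i j, X i j = Al (p i) j := by
      intro i j
      rw [hX, hgA, hp]
    have hXY : X * Y = 1 := by
      ext i j
      rw [Matrix.mul_apply]
      have h : ∀ k, X i k * Y k j = τ (Al i k * Bl k j) := by
        intro k
        rw [hX, hY, map_mul]
      rw [Finset.sum_congr rfl fun k _ => h k, ← map_sum, ← Matrix.mul_apply, hABl,
        Matrix.one_apply]
      by_cases hij : i = j <;> simp [hij, Matrix.one_apply]
    have hYX : Y * X = 1 := mul_eq_one_comm.mp hXY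
    have hZX : (Bl.submatrix id p) * X = 1 := by
      ext i j
      rw [Matrix.mul_apply]
      have h : ∀ k, Bl.submatrix id p i k * X k j = Bl i (p k) * Al (p k) j := by
        intro k
        rw [Matrix.submatrix_apply, id_eq, hXsub]
      rw [Finset.sum_congr rfl fun k _ => h k,
        Equiv.sum_comp p (fun k => Bl i k * Al k j), ← Matrix.mul_apply, hBAl]
    have hYZ : Y = Bl.submatrix id p := by
      calc Y = Y * (X * (Bl.submatrix id p)) := by
              rw [mul_eq_one_comm.mp hZX, Matrix.mul_one]
        _ = (Y * X) * (Bl.submatrix id p) := by rw [Matrix.mul_assoc]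
        _ = Bl.submatrix id p := by rw [hYX, Matrix.one_mul]
    have h := congrFun (congrFun hYZ j) k
    rw [hY] at h
    rw [h, Matrix.submatrix_apply, id_eq, hp]
  -- construction of x
  let y : Fin d → W := fun k => ρ (g k) m
  have hyM : ∀ k, y k ∈ M := fun k => hinvM _ _ hm
  let x : Fin d → W := fun j => ∑ k, Bl j k • y k
  have hxM : ∀ j, x j ∈ M := by
    intro j
    apply hsumM
    intro k _
    exact hsmulM (B j k) _ (hyM k)
  have hxinv : ∀ j (τ : L ≃ₐ[K] L), ρ τ (x j) = x j := by
    intro j τ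
    show ρ τ (∑ k, Bl j k • y k) = ∑ k, Bl j k • y k
    rw [hρsum]
    have step : ∀ k, ρ τ (Bl j k • y k) = Bl j (e (τ * g k)) • y (e (τ * g k)) := by
      intro k
      rw [hsmul, hgB]
      congr 1
      show ρ τ (ρ (g k) m) = ρ (g (e (τ * g k))) m
      rw [← hcomp]
      congr 1
      exact (e.symm_apply_apply (τ * g k)).symm
    rw [Finset.sum_congr rfl fun k _ => step k]
    let p : Fin d ≃ Fin d := e.symm.trans ((Equiv.mulLeft τ).trans e)
    exact Equiv.sum_comp p (fun k => Bl j k • y k)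
  have hxsum : ∑ j, ((a j : L)) • x j = m := by
    have ha : ∀ j, ((a j : L)) = Al (e 1) j := by
      intro j
      rw [hAl]
      have h : g (e 1) = 1 := e.symm_apply_apply 1
      rw [h]
      rfl
    calc ∑ j, ((a j : L)) • x j
        = ∑ j, ∑ k, (Al (e 1) j * Bl j k) • y k := by
          apply Finset.sum_congr rfl
          intro j _
          rw [ha j]
          show Al (e 1) j • (∑ k, Bl j k • y k) = _
          rw [Finset.smul_sum]
          exact Finset.sum_congr rfl fun k _ => (smul_smul _ _ _)
      _ = ∑ k, (∑ j, Al (e 1) j * Bl j k) • y k := by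
          rw [Finset.sum_comm]
          exact Finset.sum_congr rfl fun k _ => (Finset.sum_smul).symm
      _ = ∑ k, ((Al * Bl) (e 1) k) • y k :=
          Finset.sum_congr rfl fun k _ => by rw [Matrix.mul_apply]
      _ = ∑ k, ((1 : Matrix (Fin d) (Fin d) L) (e 1) k) • y k := by rw [hABl]
      _ = y (e 1) := by
          rw [Finset.sum_eq_single (e 1)]
          · simp [Matrix.one_apply]
          · intro k _ hk
            simp [Matrix.one_apply, Ne.symm hk]
          · intro h; exact absurd (Finset.mem_univ _) h
      _ = m := by
          show ρ (g (e 1)) m = m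
          have h : g (e 1) = 1 := e.symm_apply_apply 1
          rw [h, hone]
  refine ⟨x, ⟨fun j => ⟨hxM j, fun σ => hxinv j σ⟩, hxsum⟩, ?_⟩
  -- uniqueness
  rintro x' ⟨hx'pr, hx'sum⟩
  funext i
  rw [← sub_eq_zero]
  set z : Fin d → W := fun j => x' j - x j with hz
  have hzinv : ∀ j τ, ρ τ (z j) = z j := by
    intro j τ
    show ρ τ (x' j - x j) = x' j - x j
    rw [hρsub, (hx'pr j).2 τ, hxinv j τ]
  have hzsum : ∀ k : Fin d, ∑ j, Al k j • z j = 0 := by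
    intro k
    have h0 : ∑ j, ((a j : L)) • z j = 0 := by
      have h : ∑ j, ((a j : L)) • z j
          = (∑ j, ((a j : L)) • x' j) - ∑ j, ((a j : L)) • x j := by
        rw [← Finset.sum_sub_distrib]
        exact Finset.sum_congr rfl fun j _ => smul_sub _ _ _
      rw [h, hx'sum, hxsum, sub_self]
    have h1 := congrArg (ρ (g k)) h0
    rw [hρsum, hρ0] at h1
    rw [← h1]
    apply Finset.sum_congr rfl
    intro j _
    rw [hsmul, hzinv, hAl]
  show z i = 0
  calc z i = ∑ j, ((1 : Matrix (Fin d) (Fin d) L) i j) • z j := by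
        rw [Finset.sum_eq_single i]
        · simp [Matrix.one_apply]
        · intro j _ hj
          simp [Matrix.one_apply, Ne.symm hj]
        · intro h; exact absurd (Finset.mem_univ _) h
    _ = ∑ j, ((Bl * Al) i j) • z j := by rw [hBAl]
    _ = ∑ j, (∑ k, Bl i k * Al k j) • z j :=
        Finset.sum_congr rfl fun j _ => by rw [Matrix.mul_apply]
    _ = ∑ k, Bl i k • (∑ j, Al k j • z j) := by
        rw [Finset.sum_congr rfl (fun j (_ : j ∈ Finset.univ) => Finset.sum_smul),
          Finset.sum_comm]
        apply Finset.sum_congr rfl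
        intro k _
        rw [Finset.smul_sum]
        exact Finset.sum_congr rfl fun j _ => (smul_smul _ _ _).symm
    _ = 0 := by
        rw [Finset.sum_congr rfl fun k (_ : k ∈ Finset.univ) => by rw [hzsum k, smul_zero]]
        exact Finset.sum_const_zero
end
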